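/- A valid core inequality β̄₀ + Σ_{j=1}^n β̄_j x_j + β′ y ≥ 0 with strictly increasing coefficients β̄_1 < β̄_2 < … < β̄_n is a core facet of conv(G) if and only if it is satisfied exactly at (x^k, m(x^k)) for every k ∈ {0,…,n}; and in that case no other core inequality with the same β′ is a core facet of conv(G). -/

import Mathlib

open Finset

/-- The symmetric multilinear polynomial `m(x) = ∑_{i=2}^n c_i ∑_{|J|=i} ∏_{j∈J} x_j`. -/
noncomputable def mPoly (n : ℕ) (c : ℕ → ℝ) (x : Fin n → ℝ) : ℝ :=
  ∑ i ∈ Finset.Icc 2 n, c i *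
    ∑ J ∈ Finset.powersetCard i (Finset.univ : Finset (Fin n)), ∏ j ∈ J, x j

/-- The box `X = [ℓ,u]^n`. -/
def Xbox (n : ℕ) (ℓ u : ℝ) : Set (Fin n → ℝ) :=
  {x | ∀ j, x j ∈ Set.Icc ℓ u}

/-- The graph `G = {(x,y) : x ∈ X, y = m(x)}`. -/
def Gset (n : ℕ) (ℓ u : ℝ) (c : ℕ → ℝ) : Set ((Fin n → ℝ) × ℝ) :=
  {p | p.1 ∈ Xbox n ℓ u ∧ p.2 = mPoly n c p.1}

/-- The point `x^k` whose first `k` coordinates are `u` and remaining ones are `ℓ`. -/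
def xpt (n : ℕ) (ℓ u : ℝ) (k : ℕ) : Fin n → ℝ :=
  fun j => if (j : ℕ) < k then u else ℓ

/-- `m(x^k)`. -/
noncomputable def mval (n : ℕ) (ℓ u : ℝ) (c : ℕ → ℝ) (k : ℕ) : ℝ :=
  mPoly n c (xpt n ℓ u k)

/-- `L_k(β₀,β) = β₀ + u ∑_{j=1}^k β_j + ℓ ∑_{j=k+1}^n β_j`. -/
noncomputable def Lk (n : ℕ) (ℓ u : ℝ) (β₀ : ℝ) (β : Fin n → ℝ) (k : ℕ) : ℝ :=
  β₀ + u * ∑ j ∈ Finset.univ.filter (fun j : Fin n => (j : ℕ) < k), β j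
     + ℓ * ∑ j ∈ Finset.univ.filter (fun j : Fin n => k ≤ (j : ℕ)), β j

/-- The left-hand side `β₀ + ∑_j β_j x_j + β′ y` of an inequality, at the point `p = (x,y)`. -/
noncomputable def ineqLhs (n : ℕ) (β₀ : ℝ) (β : Fin n → ℝ) (β' : ℝ)
    (p : (Fin n → ℝ) × ℝ) : ℝ :=
  β₀ + ∑ j, β j * p.1 j + β' * p.2

/-- A core inequality: `β′ ∈ {1,-1}` and nondecreasing coefficients `β₁ ≤ … ≤ βₙ`. -/
def IsCore (n : ℕ) (β : Fin n → ℝ) (β' : ℝ) : Prop :=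
  (β' = 1 ∨ β' = -1) ∧ Monotone β

/-- Validity of the inequality `β₀ + ∑_j β_j x_j + β′ y ≥ 0` on `conv(G)`. -/
def IsValid (n : ℕ) (ℓ u : ℝ) (c : ℕ → ℝ) (β₀ : ℝ) (β : Fin n → ℝ) (β' : ℝ) : Prop :=
  ∀ p ∈ convexHull ℝ (Gset n ℓ u c), 0 ≤ ineqLhs n β₀ β β' p

/-- The point `p` satisfies the inequality exactly (with equality). -/
def ExactAt (n : ℕ) (β₀ : ℝ) (β : Fin n → ℝ) (β' : ℝ) (p : (Fin n → ℝ) × ℝ) : Prop :=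
  ineqLhs n β₀ β β' p = 0

/-- Facet-defining: there are `n+1` affinely independent points of `conv(G)`
satisfying the inequality exactly. -/
def IsFacet (n : ℕ) (ℓ u : ℝ) (c : ℕ → ℝ) (β₀ : ℝ) (β : Fin n → ℝ) (β' : ℝ) : Prop :=
  ∃ pts : Fin (n + 1) → (Fin n → ℝ) × ℝ,
    AffineIndependent ℝ pts ∧
    ∀ i, pts i ∈ convexHull ℝ (Gset n ℓ u c) ∧ ExactAt n β₀ β β' (pts i)

/-- The point `(x^k, m(x^k))` of `G`. -/
noncomputable def vtx (n : ℕ) (ℓ u : ℝ) (c : ℕ → ℝ) (k : ℕ) : (Fin n → ℝ) × ℝ :=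
  (xpt n ℓ u k, mval n ℓ u c k)

/-!
On a vertex of the box whose `u`-coordinates form the set `U`, the left-hand side equals
`β₀ + ℓ ∑ β + (u - ℓ) ∑_{j ∈ U} β_j + β' m`, and `m` is invariant under permuting coordinates.
So exchanging a `u`-coordinate `a` with an `ℓ`-coordinate `b < a` changes it by
`(u - ℓ) (β_b - β_a)`: for nondecreasing `β` the sorted vertex `x^{|U|}` minimises it among
vertices with `|U|` coordinates equal to `u`, and for strictly increasing `β` a valid inequality
is tight at no unsorted vertex.

As `m` is affine in each coordinate, `conv(G)` is the convex hull of the lifted box vertices, so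
the tight points of `conv(G)` lie in the convex hull of the tight lifted vertices. When those are
all sorted, `n + 1` affinely independent tight points force every `(x^k, m(x^k))` to be tight;
conversely these `n + 1` points are affinely independent. A core facet `γ` tight at every `x^k`
equals `β`, the equations at `x^j` and `x^{j+1}` determining `γ_j`. A core facet tight at an
unsorted vertex has a tie `γ_{k-1} = γ_k` and is tight at `x^k`; comparing with `β` at
`x^{k-1}, x^k, x^{k+1}` gives `γ_{k-1} ≤ β_{k-1} < β_k ≤ γ_k`.
-/
def IsMultiaffine {ι E : Type*} [DecidableEq ι] [AddCommGroup E] [Module ℝ E]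
    (F : (ι → ℝ) → E) : Prop :=
  ∀ x i, ∃ p q : E, ∀ t, F (Function.update x i t) = p + t • q

section Multiaffine

variable {ι E F : Type*} [DecidableEq ι] [AddCommGroup E] [Module ℝ E]
  [AddCommGroup F] [Module ℝ F]

theorem isMultiaffine_id : IsMultiaffine (id : (ι → ℝ) → ι → ℝ) := by
  intro x i
  refine ⟨Function.update x i 0, Pi.single i 1, fun t => ?_⟩
  ext j
  by_cases hj : j = i
  · subst hj; simp
  · simp [hj]

theorem isMultiaffine_prod (J : Finset ι) : IsMultiaffine fun x : ι → ℝ => ∏ j ∈ J, x j := by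
  intro x i
  by_cases hi : i ∈ J
  · exact ⟨0, ∏ j ∈ J \ {i}, x j, fun t => by simp [Finset.prod_update_of_mem hi]⟩
  · exact ⟨∏ j ∈ J, x j, 0, fun t => by simp [Finset.prod_update_of_notMem hi]⟩

theorem IsMultiaffine.const_smul {Φ : (ι → ℝ) → E} (hΦ : IsMultiaffine Φ) (r : ℝ) :
    IsMultiaffine fun x => r • Φ x := by
  intro x i
  obtain ⟨p, q, hpq⟩ := hΦ x i
  exact ⟨r • p, r • q, fun t => by simp only [hpq, smul_add, smul_comm r t]⟩

theorem IsMultiaffine.sum {α : Type*} (s : Finset α) {Φ : α → (ι → ℝ) → E}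
    (hΦ : ∀ a, IsMultiaffine (Φ a)) : IsMultiaffine fun x => ∑ a ∈ s, Φ a x := by
  intro x i
  choose p q hpq using fun a => hΦ a x i
  exact ⟨∑ a ∈ s, p a, ∑ a ∈ s, q a, fun t => by
    simp only [hpq, Finset.sum_add_distrib, Finset.smul_sum]⟩

theorem IsMultiaffine.prodMk {Φ : (ι → ℝ) → E} {Ψ : (ι → ℝ) → F} (hΦ : IsMultiaffine Φ)
    (hΨ : IsMultiaffine Ψ) : IsMultiaffine fun x => (Φ x, Ψ x) := by
  intro x i
  obtain ⟨p, q, hpq⟩ := hΦ x i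
  obtain ⟨p', q', hpq'⟩ := hΨ x i
  exact ⟨(p, p'), (q, q'), fun t => by simp [hpq, hpq']⟩

def boxVertex (ℓ u : ℝ) (U : Finset ι) : ι → ℝ := fun j => if j ∈ U then u else ℓ

theorem IsMultiaffine.mem_convexHull_range_boxVertex [Fintype ι] {Φ : (ι → ℝ) → E}
    (hΦ : IsMultiaffine Φ) {ℓ u : ℝ} {x : ι → ℝ} (hx : ∀ j, x j ∈ Set.Icc ℓ u) :
    Φ x ∈ convexHull ℝ (Set.range (Φ ∘ boxVertex ℓ u)) := by
  suffices key : ∀ s : Finset ι, ∀ x : ι → ℝ, (∀ j, x j ∈ Set.Icc ℓ u) →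
      (∀ j ∉ s, x j = ℓ ∨ x j = u) → Φ x ∈ convexHull ℝ (Set.range (Φ ∘ boxVertex ℓ u)) from
    key Finset.univ x hx (by simp)
  intro s
  induction s using Finset.induction_on with
  | empty =>
    intro x _ hvert
    classical
    refine subset_convexHull ℝ _ ⟨Finset.univ.filter (x · = u), congrArg Φ (funext fun j => ?_)⟩
    rcases hvert j (Finset.notMem_empty j) with h | h <;> simp [boxVertex, h, eq_comm]
  | insert i s hi ih =>
    intro x hx hvert
    obtain ⟨p, q, hpq⟩ := hΦ x i
    obtain ⟨a, b, ha, hb, hab, hxi⟩ := Icc_subset_segment (hx i)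
    have hℓu : ℓ ≤ u := (hx i).1.trans (hx i).2
    have hupdate : ∀ t, (t = ℓ ∨ t = u) → Φ (Function.update x i t) ∈
        convexHull ℝ (Set.range (Φ ∘ boxVertex ℓ u)) := by
      intro t ht
      refine ih _ (fun j => ?_) (fun j hj => ?_)
      · rcases eq_or_ne j i with rfl | hji
        · rcases ht with rfl | rfl <;> simp [hℓu]
        · simpa [hji] using hx j
      · rcases eq_or_ne j i with rfl | hji
        · simpa using ht
        · simpa [hji] using hvert j (by simp [hji, hj])
    have hcombo : Φ x = a • Φ (Function.update x i ℓ) + b • Φ (Function.update x i u) := by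
      rw [hpq, hpq, ← Function.update_eq_self i x, hpq, ← hxi]
      obtain rfl : b = 1 - a := by linarith
      module
    rw [hcombo]
    exact convex_convexHull ℝ _ (hupdate ℓ (.inl rfl)) (hupdate u (.inr rfl)) ha hb hab

end Multiaffine

theorem mem_convexHull_sep_of_nonneg_of_eq_zero {E : Type*} [AddCommGroup E] [Module ℝ E]
    {s : Set E} (f : E →ᵃ[ℝ] ℝ) (hf : ∀ y ∈ s, 0 ≤ f y) {x : E}
    (hx : x ∈ convexHull ℝ s) (hx0 : f x = 0) : x ∈ convexHull ℝ {y ∈ s | f y = 0} := by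
  set C := convexHull ℝ {y ∈ s | f y = 0}
  suffices hT : convexHull ℝ s ⊆ {y | 0 ≤ f y ∧ (f y = 0 → y ∈ C)} from (hT hx).2 hx0
  refine convexHull_min (fun y hy => ⟨hf y hy, fun hy0 => subset_convexHull ℝ _ ⟨hy, hy0⟩⟩) ?_
  rintro y ⟨hy, hyC⟩ z ⟨hz, hzC⟩ a b ha hb hab
  have hfab : f (a • y + b • z) = a * f y + b * f z := Convex.combo_affine_apply hab
  refine ⟨by rw [hfab]; positivity, fun h0 => ?_⟩
  rcases ha.eq_or_lt with rfl | ha'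
  · obtain rfl : b = 1 := by linarith
    simp_all
  rcases hb.eq_or_lt with rfl | hb'
  · obtain rfl : a = 1 := by linarith
    simp_all
  have hy0 : f y = 0 := by nlinarith
  have hz0 : f z = 0 := by nlinarith
  exact convex_convexHull ℝ _ (hyC hy0) (hzC hz0) ha hb hab

theorem AffineIndependent.card_le_card_of_subset_convexHull {ι E : Type*} [Fintype ι]
    [AddCommGroup E] [Module ℝ E] [FiniteDimensional ℝ E] {p : ι → E}
    (hp : AffineIndependent ℝ p) {s : Finset E} (hs : Set.range p ⊆ convexHull ℝ ↑s) :
    Fintype.card ι ≤ s.card := by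
  classical
  rcases s.eq_empty_or_nonempty with rfl | ⟨x, hx⟩
  · have : IsEmpty ι := ⟨fun i => by simpa using hs ⟨i, rfl⟩⟩
    simp
  have hspan : vectorSpan ℝ (Set.range p) ≤ vectorSpan ℝ (s : Set E) := by
    rw [← direction_affineSpan, ← direction_affineSpan]
    exact AffineSubspace.direction_le
      (affineSpan_le.mpr (hs.trans (convexHull_subset_affineSpan _)))
  have : Nonempty (Set.Elem (s : Set E)) := ⟨⟨x, hx⟩⟩
  calc Fintype.card ι ≤ Module.finrank ℝ (vectorSpan ℝ (Set.range p)) + 1 :=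
        hp.card_le_finrank_succ
    _ ≤ Module.finrank ℝ (vectorSpan ℝ (s : Set E)) + 1 := by
        gcongr; exact Submodule.finrank_mono hspan
    _ ≤ s.card := by
        have h := finrank_vectorSpan_range_add_one_le ℝ (Subtype.val : Set.Elem (s : Set E) → E)
        rw [Subtype.range_coe] at h
        simpa using h

theorem mPoly_comp_perm (n : ℕ) (c : ℕ → ℝ) (x : Fin n → ℝ) (σ : Equiv.Perm (Fin n)) :
    mPoly n c (x ∘ σ) = mPoly n c x := by
  unfold mPoly
  refine Finset.sum_congr rfl fun i _ => congrArg (c i * ·) ?_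
  refine Finset.sum_equiv (Equiv.finsetCongr σ) (fun J => by simp) fun J _ => ?_
  simp [Equiv.finsetCongr_apply, Finset.prod_map]

theorem isMultiaffine_mPoly (n : ℕ) (c : ℕ → ℝ) : IsMultiaffine (mPoly n c) :=
  IsMultiaffine.sum _ fun i => (IsMultiaffine.sum _ fun J => isMultiaffine_prod J).const_smul (c i)

noncomputable def graphPoint (n : ℕ) (c : ℕ → ℝ) (x : Fin n → ℝ) : (Fin n → ℝ) × ℝ :=
  (x, mPoly n c x)

noncomputable def ineqLhsAffine (n : ℕ) (β₀ : ℝ) (β : Fin n → ℝ) (β' : ℝ) :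
    ((Fin n → ℝ) × ℝ) →ᵃ[ℝ] ℝ :=
  ((∑ j, β j • (LinearMap.proj j).comp (LinearMap.fst ℝ (Fin n → ℝ) ℝ)) +
      β' • LinearMap.snd ℝ (Fin n → ℝ) ℝ).toAffineMap + AffineMap.const ℝ _ β₀

theorem coe_ineqLhsAffine (n : ℕ) (β₀ : ℝ) (β : Fin n → ℝ) (β' : ℝ) :
    ⇑(ineqLhsAffine n β₀ β β') = ineqLhs n β₀ β β' := by
  ext p
  simp [ineqLhsAffine, ineqLhs]
  ring

def initSeg (n k : ℕ) : Finset (Fin n) := {j | (j : ℕ) < k}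

section Vertices

variable {n : ℕ} {ℓ u : ℝ} {c : ℕ → ℝ} {β₀ : ℝ} {β : Fin n → ℝ} {β' : ℝ}

theorem card_initSeg {k : ℕ} (hk : k ≤ n) : (initSeg n k).card = k := by
  simp [initSeg, Fin.card_filter_val_lt, hk]

theorem xpt_eq_boxVertex (k : ℕ) : xpt n ℓ u k = boxVertex ℓ u (initSeg n k) := by
  ext j
  simp [xpt, boxVertex, initSeg]

theorem vtx_eq_graphPoint (k : ℕ) :
    vtx n ℓ u c k = graphPoint n c (boxVertex ℓ u (initSeg n k)) := by
  rw [← xpt_eq_boxVertex]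
  rfl

theorem graphPoint_mem_convexHull_Gset (hlu : ℓ ≤ u) (U : Finset (Fin n)) :
    graphPoint n c (boxVertex ℓ u U) ∈ convexHull ℝ (Gset n ℓ u c) := by
  refine subset_convexHull ℝ _ ⟨fun j => ?_, rfl⟩
  by_cases hj : j ∈ U <;> simp [graphPoint, boxVertex, hj, hlu]

theorem vtx_mem_convexHull_Gset (hlu : ℓ ≤ u) (k : ℕ) :
    vtx n ℓ u c k ∈ convexHull ℝ (Gset n ℓ u c) := by
  rw [vtx_eq_graphPoint]
  exact graphPoint_mem_convexHull_Gset hlu _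

theorem mem_convexHull_exact_graphPoint (hlu : ℓ ≤ u) (hval : IsValid n ℓ u c β₀ β β')
    {p : (Fin n → ℝ) × ℝ} (hp : p ∈ convexHull ℝ (Gset n ℓ u c))
    (hexact : ExactAt n β₀ β β' p) :
    p ∈ convexHull ℝ {y ∈ Set.range (graphPoint n c ∘ boxVertex ℓ u) | ExactAt n β₀ β β' y} := by
  have hG : convexHull ℝ (Gset n ℓ u c) ⊆
      convexHull ℝ (Set.range (graphPoint n c ∘ boxVertex ℓ u)) := by
    refine convexHull_min ?_ (convex_convexHull ℝ _)
    rintro p ⟨hx, hp⟩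
    rw [show p = graphPoint n c p.1 from Prod.ext rfl hp]
    exact (isMultiaffine_id.prodMk (isMultiaffine_mPoly n c)).mem_convexHull_range_boxVertex hx
  have hnonneg : ∀ y ∈ Set.range (graphPoint n c ∘ boxVertex ℓ u),
      0 ≤ ineqLhsAffine n β₀ β β' y := by
    rintro _ ⟨U, rfl⟩
    rw [coe_ineqLhsAffine]
    exact hval _ (graphPoint_mem_convexHull_Gset hlu U)
  have := mem_convexHull_sep_of_nonneg_of_eq_zero _ hnonneg (hG hp)
    (by rwa [coe_ineqLhsAffine])
  rw [coe_ineqLhsAffine] at this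
  exact this

theorem exists_mem_notMem_of_ne_initSeg {U : Finset (Fin n)} (hU : U ≠ initSeg n U.card) :
    ∃ a ∈ U, ∃ b ∉ U, (b : ℕ) < U.card ∧ U.card ≤ a := by
  have hcard : (initSeg n U.card).card = U.card :=
    card_initSeg (by simpa using Finset.card_le_univ U)
  obtain ⟨a, haU, haI⟩ : ∃ a ∈ U, a ∉ initSeg n U.card := by
    by_contra! h
    exact hU (Finset.eq_of_subset_of_card_le h hcard.le)
  obtain ⟨b, hbI, hbU⟩ : ∃ b ∈ initSeg n U.card, b ∉ U := by
    by_contra! h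
    exact hU (Finset.eq_of_subset_of_card_le h hcard.ge).symm
  simp only [initSeg, Finset.mem_filter, Finset.mem_univ, true_and, not_lt] at haI hbI
  exact ⟨a, haU, b, hbU, hbI, haI⟩

theorem boxVertex_insert_erase {ι : Type*} [DecidableEq ι] {U : Finset ι} {a b : ι}
    (ha : a ∈ U) (hb : b ∉ U) :
    boxVertex ℓ u (insert b (U.erase a)) = boxVertex ℓ u U ∘ Equiv.swap a b := by
  ext j
  by_cases hja : j = a <;> by_cases hjb : j = b <;>
    simp_all [boxVertex, Equiv.swap_apply_of_ne_of_ne]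

theorem sum_mul_boxVertex {ι : Type*} [Fintype ι] [DecidableEq ι] (γ : ι → ℝ) (U : Finset ι) :
    ∑ j, γ j * boxVertex ℓ u U j = ℓ * ∑ j, γ j + (u - ℓ) * ∑ j ∈ U, γ j := by
  have h : ∀ j, γ j * boxVertex ℓ u U j = ℓ * γ j + if j ∈ U then (u - ℓ) * γ j else 0 := by
    intro j
    by_cases hj : j ∈ U <;> simp [boxVertex, hj] <;> ring
  simp only [h, Finset.sum_add_distrib, Finset.sum_ite_mem, Finset.univ_inter, Finset.mul_sum]

theorem ineqLhs_graphPoint_insert_erase {U : Finset (Fin n)} {a b : Fin n} (ha : a ∈ U)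
    (hb : b ∉ U) :
    ineqLhs n β₀ β β' (graphPoint n c (boxVertex ℓ u (insert b (U.erase a)))) =
      ineqLhs n β₀ β β' (graphPoint n c (boxVertex ℓ u U)) + (u - ℓ) * (β b - β a) := by
  have hsum : ∑ j ∈ insert b (U.erase a), β j = ∑ j ∈ U, β j + (β b - β a) := by
    rw [Finset.sum_insert (by simp [hb]), Finset.sum_erase_eq_sub ha]
    ring
  simp only [ineqLhs, graphPoint, sum_mul_boxVertex, hsum]
  rw [boxVertex_insert_erase ha hb, mPoly_comp_perm]
  ring

theorem ineqLhs_initSeg_le (hlu : ℓ ≤ u) (hmono : Monotone β) (U : Finset (Fin n)) :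
    ineqLhs n β₀ β β' (graphPoint n c (boxVertex ℓ u (initSeg n U.card))) ≤
      ineqLhs n β₀ β β' (graphPoint n c (boxVertex ℓ u U)) := by
  obtain ⟨m, hm⟩ : ∃ m, (U \ initSeg n U.card).card = m := ⟨_, rfl⟩
  induction m using Nat.strong_induction_on generalizing U with
  | _ m ih =>
  by_cases hU : U = initSeg n U.card
  · conv_rhs => rw [hU]
  obtain ⟨a, ha, b, hb, hbk, hka⟩ := exists_mem_notMem_of_ne_initSeg hU
  set V := insert b (U.erase a)
  have hcard : V.card = U.card := by
    rw [Finset.card_insert_of_notMem (by simp [hb]), Finset.card_erase_of_mem ha]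
    have := Finset.card_pos.2 ⟨a, ha⟩
    omega
  have hdiff : V \ initSeg n V.card = (U \ initSeg n U.card).erase a := by
    ext j
    by_cases hja : j = a <;> by_cases hjb : j = b <;> simp_all [V, initSeg]
  have hlt : (V \ initSeg n V.card).card < m := by
    rw [hdiff, ← hm]
    exact Finset.card_erase_lt_of_mem (by simp [ha, initSeg, hka])
  have hba : β b ≤ β a := hmono (Fin.le_def.2 (by omega))
  calc ineqLhs n β₀ β β' (graphPoint n c (boxVertex ℓ u (initSeg n U.card)))
      = ineqLhs n β₀ β β' (graphPoint n c (boxVertex ℓ u (initSeg n V.card))) := by rw [hcard]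
    _ ≤ ineqLhs n β₀ β β' (graphPoint n c (boxVertex ℓ u V)) := ih _ hlt V rfl
    _ ≤ ineqLhs n β₀ β β' (graphPoint n c (boxVertex ℓ u U)) := by
      rw [ineqLhs_graphPoint_insert_erase ha hb]
      nlinarith

theorem eq_initSeg_of_exactAt (hlu : ℓ < u) (hstrict : StrictMono β)
    (hval : IsValid n ℓ u c β₀ β β') {U : Finset (Fin n)}
    (hU : ExactAt n β₀ β β' (graphPoint n c (boxVertex ℓ u U))) : U = initSeg n U.card := by
  rw [ExactAt] at hU
  by_contra hne
  obtain ⟨a, ha, b, hb, hbk, hka⟩ := exists_mem_notMem_of_ne_initSeg hne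
  have hswap := hval _ (graphPoint_mem_convexHull_Gset hlu.le (insert b (U.erase a)))
  rw [ineqLhs_graphPoint_insert_erase ha hb, hU] at hswap
  have hba : β b < β a := hstrict (Fin.lt_def.2 (by omega))
  nlinarith

theorem exists_tie_of_exactAt (hlu : ℓ < u) (hmono : Monotone β)
    (hval : IsValid n ℓ u c β₀ β β') {U : Finset (Fin n)}
    (hU : ExactAt n β₀ β β' (graphPoint n c (boxVertex ℓ u U))) (hne : U ≠ initSeg n U.card) :
    ∃ i j : Fin n, (j : ℕ) = i + 1 ∧ β i = β j ∧ ExactAt n β₀ β β' (vtx n ℓ u c j) := by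
  rw [ExactAt] at hU
  obtain ⟨a, ha, b, hb, hbk, hka⟩ := exists_mem_notMem_of_ne_initSeg hne
  have hswap := hval _ (graphPoint_mem_convexHull_Gset hlu.le (insert b (U.erase a)))
  rw [ineqLhs_graphPoint_insert_erase ha hb, hU] at hswap
  have hab : β a ≤ β b := by nlinarith
  let i : Fin n := ⟨U.card - 1, by omega⟩
  let j : Fin n := ⟨U.card, by omega⟩
  have hbi : β b ≤ β i := hmono (Fin.le_def.2 (by simp [i]; omega))
  have hij : β i ≤ β j := hmono (Fin.le_def.2 (by simp [i, j]))
  have hja : β j ≤ β a := hmono (Fin.le_def.2 (by simpa [j] using hka))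
  refine ⟨i, j, by simp [i, j]; omega, by linarith, ?_⟩
  have hle := ineqLhs_initSeg_le (β₀ := β₀) (β' := β') (c := c) hlu.le hmono U
  have hge := hval _ (vtx_mem_convexHull_Gset hlu.le (c := c) j)
  rw [vtx_eq_graphPoint] at hge ⊢
  exact le_antisymm (hle.trans hU.le) hge

theorem xpt_succ_sub (j : Fin n) : xpt n ℓ u (j + 1) - xpt n ℓ u j = (u - ℓ) • Pi.single j 1 := by
  ext i
  rcases lt_trichotomy i j with h | rfl | h
  · simp [xpt, h.ne, Fin.lt_def.1 h, Nat.lt_succ_of_lt (Fin.lt_def.1 h)]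
  · simp [xpt]
  · have h' : ¬ (i : ℕ) < j + 1 := by rw [Fin.lt_def] at h; omega
    simp [xpt, h.ne', h', not_lt.2 (Fin.lt_def.1 h).le]

theorem affineIndependent_xpt (hlu : ℓ ≠ u) :
    AffineIndependent ℝ fun k : Fin (n + 1) => xpt n ℓ u k := by
  rw [affineIndependent_iff_finrank_vectorSpan_eq ℝ _ (Fintype.card_fin _)]
  suffices h : vectorSpan ℝ (Set.range fun k : Fin (n + 1) => xpt n ℓ u k) = ⊤ by
    rw [h, finrank_top, Module.finrank_fin_fun]
  rw [eq_top_iff, ← (Pi.basisFun ℝ (Fin n)).span_eq, Submodule.span_le]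
  rintro _ ⟨j, rfl⟩
  rw [Pi.basisFun_apply]
  have h := vsub_mem_vectorSpan ℝ (Set.mem_range_self (f := fun k : Fin (n + 1) => xpt n ℓ u k)
    j.succ) (Set.mem_range_self j.castSucc)
  simp only [Fin.val_succ, Fin.val_castSucc, vsub_eq_sub, xpt_succ_sub] at h
  simpa [smul_smul, inv_mul_cancel₀ (sub_ne_zero.2 hlu.symm)] using
    Submodule.smul_mem _ (u - ℓ)⁻¹ h

theorem affineIndependent_vtx (hlu : ℓ ≠ u) :
    AffineIndependent ℝ fun k : Fin (n + 1) => vtx n ℓ u c k :=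
  AffineIndependent.of_comp (AffineMap.fst) (affineIndependent_xpt hlu)

theorem ineqLhs_vtx_succ_sub (j : Fin n) :
    ineqLhs n β₀ β β' (vtx n ℓ u c (j + 1)) - ineqLhs n β₀ β β' (vtx n ℓ u c j) =
      (u - ℓ) * β j + β' * (mval n ℓ u c (j + 1) - mval n ℓ u c j) := by
  have h := congrArg (fun x => ∑ i, β i * x i) (xpt_succ_sub (ℓ := ℓ) (u := u) j)
  simp only [Pi.sub_apply, mul_sub, Finset.sum_sub_distrib, Pi.smul_apply, smul_eq_mul,
    Pi.single_apply, mul_ite, mul_one, mul_zero, Finset.sum_ite_eq', Finset.mem_univ,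
    if_true] at h
  simp only [ineqLhs, vtx]
  linarith

theorem ineqLhs_vtx_succ_sub_of_forall_exactAt
    (hβ : ∀ k ≤ n, ExactAt n β₀ β β' (vtx n ℓ u c k)) (γ₀ : ℝ) (γ : Fin n → ℝ) (j : Fin n) :
    ineqLhs n γ₀ γ β' (vtx n ℓ u c (j + 1)) - ineqLhs n γ₀ γ β' (vtx n ℓ u c j) =
      (u - ℓ) * (γ j - β j) := by
  have hβj := ineqLhs_vtx_succ_sub (β₀ := β₀) (β := β) (β' := β') (c := c) (ℓ := ℓ) (u := u) j
  have hγj := ineqLhs_vtx_succ_sub (β₀ := γ₀) (β := γ) (β' := β') (c := c) (ℓ := ℓ) (u := u) j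
  rw [show ineqLhs n β₀ β β' _ = 0 from hβ _ j.isLt,
    show ineqLhs n β₀ β β' _ = 0 from hβ _ j.isLt.le] at hβj
  linarith

theorem eq_of_forall_exactAt_vtx (hlu : ℓ ≠ u) {γ₀ : ℝ} {γ : Fin n → ℝ}
    (hβ : ∀ k ≤ n, ExactAt n β₀ β β' (vtx n ℓ u c k))
    (hγ : ∀ k ≤ n, ExactAt n γ₀ γ β' (vtx n ℓ u c k)) : γ₀ = β₀ ∧ γ = β := by
  have hcoeff : γ = β := by
    funext j
    have h := ineqLhs_vtx_succ_sub_of_forall_exactAt hβ γ₀ γ j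
    rw [show ineqLhs n γ₀ γ β' _ = 0 from hγ _ j.isLt,
      show ineqLhs n γ₀ γ β' _ = 0 from hγ _ j.isLt.le, sub_zero, eq_comm,
      mul_eq_zero] at h
    exact sub_eq_zero.1 (h.resolve_left (sub_ne_zero.2 hlu.symm))
  subst hcoeff
  have h0 : ineqLhs n γ₀ γ β' (vtx n ℓ u c 0) = 0 := hγ 0 (Nat.zero_le n)
  have h0' : ineqLhs n β₀ γ β' (vtx n ℓ u c 0) = 0 := hβ 0 (Nat.zero_le n)
  simp only [ineqLhs] at h0 h0'
  exact ⟨by linarith, rfl⟩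

theorem lt_of_exactAt_vtx (hlu : ℓ < u) (hstrict : StrictMono β)
    (hβ : ∀ k ≤ n, ExactAt n β₀ β β' (vtx n ℓ u c k)) {γ₀ : ℝ} {γ : Fin n → ℝ}
    (hval : IsValid n ℓ u c γ₀ γ β') {i j : Fin n} (hij : (j : ℕ) = i + 1)
    (hj : ExactAt n γ₀ γ β' (vtx n ℓ u c j)) : γ i < γ j := by
  rw [ExactAt] at hj
  have hi := ineqLhs_vtx_succ_sub_of_forall_exactAt hβ γ₀ γ i
  have hj' := ineqLhs_vtx_succ_sub_of_forall_exactAt hβ γ₀ γ j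
  rw [← hij, hj] at hi
  rw [hj] at hj'
  have hi0 := hval _ (vtx_mem_convexHull_Gset hlu.le (c := c) i)
  have hj0 := hval _ (vtx_mem_convexHull_Gset hlu.le (c := c) (j + 1))
  have hγβi : γ i ≤ β i := by nlinarith
  have hβγj : β j ≤ γ j := by nlinarith
  linarith [hstrict (Fin.lt_def.2 (by omega) : i < j)]

theorem forall_exactAt_vtx_of_isFacet (hlu : ℓ ≤ u) (hval : IsValid n ℓ u c β₀ β β')
    (hsorted : ∀ U : Finset (Fin n),
      ExactAt n β₀ β β' (graphPoint n c (boxVertex ℓ u U)) → U = initSeg n U.card)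
    (hfacet : IsFacet n ℓ u c β₀ β β') : ∀ k ≤ n, ExactAt n β₀ β β' (vtx n ℓ u c k) := by
  classical
  obtain ⟨pts, hai, hpts⟩ := hfacet
  set T := (Finset.range (n + 1)).filter fun k => ExactAt n β₀ β β' (vtx n ℓ u c k)
  have hsub : Set.range pts ⊆ convexHull ℝ ↑(T.image (vtx n ℓ u c)) := by
    rintro _ ⟨i, rfl⟩
    refine convexHull_mono ?_ (mem_convexHull_exact_graphPoint hlu hval (hpts i).1 (hpts i).2)
    rintro _ ⟨⟨U, rfl⟩, hU⟩
    have hvtx : graphPoint n c (boxVertex ℓ u U) = vtx n ℓ u c U.card := by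
      rw [vtx_eq_graphPoint, ← hsorted U hU]
    have hk : U.card ≤ n := by simpa using Finset.card_le_univ U
    simp only [Function.comp_apply] at hU ⊢
    rw [hvtx] at hU ⊢
    exact Finset.mem_coe.2 (Finset.mem_image_of_mem _ (by simp [T, hU]; omega))
  have hcard := (hai.card_le_card_of_subset_convexHull hsub).trans Finset.card_image_le
  have hT : T = Finset.range (n + 1) :=
    Finset.eq_of_subset_of_card_le (Finset.filter_subset _ _) (by simpa using hcard)
  intro k hk
  have hkT : k ∈ T := hT ▸ Finset.mem_range.2 (Nat.lt_succ_of_le hk)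
  exact (Finset.mem_filter.1 hkT).2

end Vertices

theorem stmt7_general (n : ℕ) (ℓ u : ℝ) (hlu : ℓ < u) (c : ℕ → ℝ)
    (β₀ : ℝ) (β : Fin n → ℝ) (β' : ℝ)
    (hstrict : StrictMono β)
    (hvalid : IsValid n ℓ u c β₀ β β') :
    (IsFacet n ℓ u c β₀ β β' ↔ ∀ k ≤ n, ExactAt n β₀ β β' (vtx n ℓ u c k)) ∧
    (IsFacet n ℓ u c β₀ β β' →
      ∀ (γ₀ : ℝ) (γ : Fin n → ℝ), IsCore n γ β' → IsValid n ℓ u c γ₀ γ β' →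
        IsFacet n ℓ u c γ₀ γ β' → γ₀ = β₀ ∧ γ = β) := by
  have hiff : IsFacet n ℓ u c β₀ β β' ↔ ∀ k ≤ n, ExactAt n β₀ β β' (vtx n ℓ u c k) :=
    ⟨forall_exactAt_vtx_of_isFacet hlu.le hvalid fun _ => eq_initSeg_of_exactAt hlu hstrict hvalid,
      fun h => ⟨_, affineIndependent_vtx hlu.ne, fun k =>
        ⟨vtx_mem_convexHull_Gset hlu.le _, h k (Nat.lt_succ_iff.1 k.isLt)⟩⟩⟩
  refine ⟨hiff, fun hfacet γ₀ γ hγ hγvalid hγfacet => ?_⟩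
  by_cases hsorted : ∀ U : Finset (Fin n),
      ExactAt n γ₀ γ β' (graphPoint n c (boxVertex ℓ u U)) → U = initSeg n U.card
  · exact eq_of_forall_exactAt_vtx hlu.ne (hiff.1 hfacet)
      (forall_exactAt_vtx_of_isFacet hlu.le hγvalid hsorted hγfacet)
  · push Not at hsorted
    obtain ⟨U, hU, hne⟩ := hsorted
    obtain ⟨i, j, hij, htie, hj⟩ := exists_tie_of_exactAt hlu hγ.2 hγvalid hU hne
    exact absurd htie (lt_of_exactAt_vtx hlu hstrict (hiff.1 hfacet) hγvalid hij hj).ne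

/-- A valid core inequality with strictly increasing coefficients is a
core facet iff it is satisfied exactly at `(x^k, m(x^k))` for every `k ∈ {0,…,n}`; and
in that case no other core inequality with the same `β′` is a core facet. -/
theorem stmt7 (n : ℕ) (hn : 2 ≤ n) (ℓ u : ℝ) (hlu : ℓ < u) (c : ℕ → ℝ)
    (β₀ : ℝ) (β : Fin n → ℝ) (β' : ℝ)
    (hβ' : β' = 1 ∨ β' = -1) (hstrict : StrictMono β)
    (hvalid : IsValid n ℓ u c β₀ β β') :
    (IsFacet n ℓ u c β₀ β β' ↔ ∀ k ≤ n, ExactAt n β₀ β β' (vtx n ℓ u c k)) ∧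
    (IsFacet n ℓ u c β₀ β β' →
      ∀ (γ₀ : ℝ) (γ : Fin n → ℝ), IsCore n γ β' → IsValid n ℓ u c γ₀ γ β' →
        IsFacet n ℓ u c γ₀ γ β' → γ₀ = β₀ ∧ γ = β) :=
  stmt7_general n ℓ u hlu c β₀ β β' hstrict hvalid
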